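/- arXiv:1306.2184 — 2 statements merged into one kernel-verified Lean document; each statement's English description precedes it below -/
import Mathlib

section
/- For invertible multivectors B₁,…,B_d and any A ∈ Cl(p,q): B₁⋯B_d·A = Σ_{j∈{0,1}^d} (−1)^{|j|} A_{c^j(B_d,…,B₁)} · B₁⋯B_d, where A_{c^j(B_d,…,B₁)} applies the projections in reversed order c^{j₁}_{B₁}∘⋯∘c^{j_d}_{B_d} (i.e. first with respect to B_d). -/
/-- The commuting/anticommuting projections `c⁰_B(A) = ½(A + B⁻¹AB)`,
`c¹_B(A) = ½(A − B⁻¹AB)` (with `B⁻¹ = β⁻¹ B`, valid when `B² = β·1`). -/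
noncomputable def cProj {V : Type*} [AddCommGroup V] [Module ℝ V] {Q : QuadraticForm ℝ V}
    (b : Bool) (β : ℝ) (B A : CliffordAlgebra Q) : CliffordAlgebra Q :=
  if b then (2⁻¹ : ℝ) • (A - (β⁻¹ • B) * A * B) else (2⁻¹ : ℝ) • (A + (β⁻¹ • B) * A * B)

/-- Iterated decomposition `A_{c^j(→B)}`: apply `c^{j₁}_{B₁}` first, then `c^{j₂}_{B₂}`, …,
finally `c^{j_d}_{B_d}`. -/
noncomputable def iterProj {V : Type*} [AddCommGroup V] [Module ℝ V] {Q : QuadraticForm ℝ V}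
    {d : ℕ} (β : Fin d → ℝ) (B : Fin d → CliffordAlgebra Q) (j : Fin d → Bool)
    (A : CliffordAlgebra Q) : CliffordAlgebra Q :=
  (List.finRange d).foldl (fun acc k => cProj (j k) (β k) (B k) acc) A

/-- Iterated decomposition `A_{c^j(←B)} = A_{c^j(B_d,…,B₁)}`: apply `c^{j_d}_{B_d}` first,
then …, finally `c^{j₁}_{B₁}`. -/
noncomputable def iterProjRev {V : Type*} [AddCommGroup V] [Module ℝ V] {Q : QuadraticForm ℝ V}
    {d : ℕ} (β : Fin d → ℝ) (B : Fin d → CliffordAlgebra Q) (j : Fin d → Bool)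
    (A : CliffordAlgebra Q) : CliffordAlgebra Q :=
  ((List.finRange d).reverse).foldl (fun acc k => cProj (j k) (β k) (B k) acc) A

/-!
Since `c⁰_B X - c¹_B X = β⁻¹ B X B` and `B² = β`, we have `B X = (c⁰_B X - c¹_B X) B`.
By induction on `d`, pushing `B₁` past the signed sum for `B₂, …, B_d` splits each of its terms
`X` into `c⁰_{B₁} X - c¹_{B₁} X`: these are the terms of the full signed sum with `j₁ = 0, 1`.
-/

open Finset

theorem mul_eq_smul_mul_mul_mul {R A : Type*} [Field R] [Ring A] [Algebra R A] {β : R}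
    (hβ : β ≠ 0) {B : A} (hB : B * B = algebraMap R A β) (X : A) :
    B * X = (β⁻¹ • (B * X * B)) * B := by
  rw [smul_mul_assoc, mul_assoc (B * X), hB, ← Algebra.commutes, ← Algebra.smul_def,
    smul_smul, inv_mul_cancel₀ hβ, one_smul]

theorem neg_one_pow_card_filter_succ {R : Type*} [Monoid R] [HasDistribNeg R] {d : ℕ}
    (j : Fin (d + 1) → Bool) :
    (-1 : R) ^ #{k | j k = true} =
      (if j 0 then -1 else 1) * (-1) ^ #{k : Fin d | j k.succ = true} := by
  rw [Fin.card_filter_univ_succ', pow_add]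
  cases j 0 <;> simp

section
variable {V : Type*} [AddCommGroup V] [Module ℝ V] {Q : QuadraticForm ℝ V}

theorem cProj_false_sub_cProj_true (β : ℝ) (B X : CliffordAlgebra Q) :
    cProj false β B X - cProj true β B X = β⁻¹ • (B * X * B) := by
  simp only [cProj, Bool.false_eq_true, if_false, if_true, smul_mul_assoc]
  module

theorem iterProjRev_succ {d : ℕ} (β : Fin (d + 1) → ℝ) (B : Fin (d + 1) → CliffordAlgebra Q)
    (j : Fin (d + 1) → Bool) (A : CliffordAlgebra Q) :
    iterProjRev β B j A =
      cProj (j 0) (β 0) (B 0)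
        (iterProjRev (fun k => β k.succ) (fun k => B k.succ) (fun k => j k.succ) A) := by
  simp [iterProjRev, List.finRange_succ, List.foldr_map]

theorem sum_neg_one_pow_smul_iterProjRev_succ {d : ℕ} (β : Fin (d + 1) → ℝ)
    (B : Fin (d + 1) → CliffordAlgebra Q) (A : CliffordAlgebra Q) :
    ∑ j : Fin (d + 1) → Bool, (-1 : ℝ) ^ #{k | j k = true} • iterProjRev β B j A =
      (β 0)⁻¹ • (B 0 * (∑ j : Fin d → Bool, (-1 : ℝ) ^ #{k | j k = true} •
        iterProjRev (fun k => β k.succ) (fun k => B k.succ) j A) * B 0) := by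
  rw [← (Fin.consEquiv fun _ => Bool).sum_comp, Fintype.sum_prod_type, Fintype.sum_bool,
    ← sum_add_distrib, mul_sum, sum_mul, smul_sum]
  refine sum_congr rfl fun j _ => ?_
  simp only [iterProjRev_succ, neg_one_pow_card_filter_succ, Fin.consEquiv_apply, Fin.cons_zero,
    Fin.cons_succ]
  rw [mul_smul_comm, smul_mul_assoc, smul_comm, ← cProj_false_sub_cProj_true]
  simp only [if_true, Bool.false_eq_true, if_false, neg_one_mul, one_mul, neg_smul, smul_sub]
  abel

end

/-- `B₁⋯B_d·A = (Σ_j (−1)^{|j|} A_{c^j(B_d,…,B₁)}) · B₁⋯B_d`, where the projections are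
applied in reversed order (first with respect to `B_d`). -/
theorem prod_mul_eq_sum_iterProjRev_mul {V : Type*} [AddCommGroup V] [Module ℝ V]
    (Q : QuadraticForm ℝ V) {d : ℕ} (β : Fin d → ℝ) (B : Fin d → CliffordAlgebra Q)
    (hβ : ∀ k, β k ≠ 0)
    (hB : ∀ k, B k * B k = algebraMap ℝ (CliffordAlgebra Q) (β k))
    (A : CliffordAlgebra Q) :
    (List.ofFn B).prod * A =
      (∑ j : Fin d → Bool,
          ((-1 : ℝ) ^ (Finset.univ.filter fun k => j k = true).card • iterProjRev β B j A)) *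
        (List.ofFn B).prod := by
  induction d with
  | zero => simp [iterProjRev]
  | succ d ih =>
    rw [List.ofFn_succ, List.prod_cons, mul_assoc,
      ih (fun k => β k.succ) (fun k => B k.succ) (fun k => hβ k.succ) (fun k => hB k.succ),
      ← mul_assoc, mul_eq_smul_mul_mul_mul (hβ 0) (hB 0),
      ← sum_neg_one_pow_smul_iterProjRev_succ, mul_assoc]
end

section
/- If every function in F₁ takes values in the center of Cl(p,q), then the geometric Fourier transform is left linear over Cl(p,q): for A(x) = C·B(x) with constant C ∈ Cl(p,q), ℱ_{F₁,F₂}(A)(u) = C·ℱ_{F₁,F₂}(B)(u). Symmetrically, if every function in F₂ is central-valued, ℱ is right Cl(p,q)-linear. -/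
open MeasureTheory

/-- The integrand of the general geometric Fourier transform. -/
noncomputable def gftIntegrand {𝒢 : Type*} [NormedRing 𝒢] [NormedAlgebra ℝ 𝒢]
    [CompleteSpace 𝒢] {m μ κ : ℕ}
    (f1 : Fin μ → (Fin m → ℝ) → (Fin m → ℝ) → 𝒢)
    (f2 : Fin κ → (Fin m → ℝ) → (Fin m → ℝ) → 𝒢)
    (A : (Fin m → ℝ) → 𝒢) (u x : Fin m → ℝ) : 𝒢 :=
  (List.ofFn fun l => NormedSpace.exp (-(f1 l x u))).prod * A x *
    (List.ofFn fun l => NormedSpace.exp (-(f2 l x u))).prod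

/-- The general geometric Fourier transform `ℱ_{F₁,F₂}(A)(u)`. -/
noncomputable def gft {𝒢 : Type*} [NormedRing 𝒢] [NormedAlgebra ℝ 𝒢]
    [CompleteSpace 𝒢] {m μ κ : ℕ}
    (f1 : Fin μ → (Fin m → ℝ) → (Fin m → ℝ) → 𝒢)
    (f2 : Fin κ → (Fin m → ℝ) → (Fin m → ℝ) → 𝒢)
    (A : (Fin m → ℝ) → 𝒢) (u : Fin m → ℝ) : 𝒢 :=
  ∫ x, gftIntegrand f1 f2 A u x

/-! Central values commute with every factor `e^{-f}` of the kernel, so a constant factor can be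
moved past the kernel product and then out of the (Bochner) integral. -/

theorem Commute.list_prod_ofFn_exp_neg_left {𝔸 : Type*} [Ring 𝔸] [TopologicalSpace 𝔸]
    [IsTopologicalRing 𝔸] [T2Space 𝔸] {n : ℕ} {f : Fin n → 𝔸} {c : 𝔸}
    (h : ∀ l, Commute (f l) c) :
    Commute (List.ofFn fun l => NormedSpace.exp (-f l)).prod c :=
  Commute.list_prod_left _ _ fun _ hz => by
    obtain ⟨l, rfl⟩ := List.mem_ofFn.mp hz
    exact (h l).neg_left.exp_left

section

variable {𝒢 : Type*} [NormedRing 𝒢] [NormedAlgebra ℝ 𝒢] [CompleteSpace 𝒢] {m μ κ : ℕ}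
  (f1 : Fin μ → (Fin m → ℝ) → (Fin m → ℝ) → 𝒢) (f2 : Fin κ → (Fin m → ℝ) → (Fin m → ℝ) → 𝒢)
  {C : 𝒢} (B : (Fin m → ℝ) → 𝒢) (u : Fin m → ℝ)

theorem gftIntegrand_const_mul (x : Fin m → ℝ) (hC : ∀ l, Commute (f1 l x u) C) :
    gftIntegrand f1 f2 (fun x => C * B x) u x = C * gftIntegrand f1 f2 B u x := by
  simp only [gftIntegrand, ← mul_assoc, (Commute.list_prod_ofFn_exp_neg_left hC).eq]

theorem gftIntegrand_mul_const (x : Fin m → ℝ) (hC : ∀ l, Commute (f2 l x u) C) :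
    gftIntegrand f1 f2 (fun x => B x * C) u x = gftIntegrand f1 f2 B u x * C := by
  simp only [gftIntegrand, mul_assoc, (Commute.list_prod_ofFn_exp_neg_left hC).eq]

theorem gft_const_mul (hB : Integrable (gftIntegrand f1 f2 B u))
    (hC : ∀ l x, Commute (f1 l x u) C) :
    gft f1 f2 (fun x => C * B x) u = C * gft f1 f2 B u := by
  simp only [gft, gftIntegrand_const_mul f1 f2 B u _ (hC · _)]
  exact integral_const_mul_of_integrable hB

theorem gft_mul_const (hB : Integrable (gftIntegrand f1 f2 B u))
    (hC : ∀ l x, Commute (f2 l x u) C) :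
    gft f1 f2 (fun x => B x * C) u = gft f1 f2 B u * C := by
  simp only [gft, gftIntegrand_mul_const f1 f2 B u _ (hC · _)]
  exact integral_mul_const_of_integrable hB

end

theorem gft_central_linear_general {𝒢 : Type*} [NormedRing 𝒢] [NormedAlgebra ℝ 𝒢] [CompleteSpace 𝒢]
    {m μ κ : ℕ}
    (f1 : Fin μ → (Fin m → ℝ) → (Fin m → ℝ) → 𝒢)
    (f2 : Fin κ → (Fin m → ℝ) → (Fin m → ℝ) → 𝒢)
    (C : 𝒢) (B : (Fin m → ℝ) → 𝒢)
    (hInt : ∀ u, Integrable (gftIntegrand f1 f2 B u)) :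
    ((∀ l x u (D : 𝒢), f1 l x u * D = D * f1 l x u) →
      ∀ u, gft f1 f2 (fun x => C * B x) u = C * gft f1 f2 B u) ∧
    ((∀ l x u (D : 𝒢), f2 l x u * D = D * f2 l x u) →
      ∀ u, gft f1 f2 (fun x => B x * C) u = gft f1 f2 B u * C) :=
  ⟨fun hc u => gft_const_mul f1 f2 B u (hInt u) fun l x => hc l x u C,
    fun hc u => gft_mul_const f1 f2 B u (hInt u) fun l x => hc l x u C⟩

/-- If every function in `F₁` is central-valued, the GFT is left `Cl(p,q)`-linear;
symmetrically, if every function in `F₂` is central-valued, it is right linear. -/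
theorem gft_central_linear {𝒢 : Type*} [NormedRing 𝒢] [NormedAlgebra ℝ 𝒢] [CompleteSpace 𝒢]
    {m μ κ : ℕ}
    (f1 : Fin μ → (Fin m → ℝ) → (Fin m → ℝ) → 𝒢)
    (f2 : Fin κ → (Fin m → ℝ) → (Fin m → ℝ) → 𝒢)
    (hf1 : ∀ l x u, ∃ r : ℝ, 0 < r ∧ f1 l x u * f1 l x u = algebraMap ℝ 𝒢 (-r))
    (hf2 : ∀ l x u, ∃ r : ℝ, 0 < r ∧ f2 l x u * f2 l x u = algebraMap ℝ 𝒢 (-r))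
    (C : 𝒢) (B : (Fin m → ℝ) → 𝒢)
    (hInt : ∀ u, Integrable (gftIntegrand f1 f2 B u)) :
    ((∀ l x u (D : 𝒢), f1 l x u * D = D * f1 l x u) →
      ∀ u, gft f1 f2 (fun x => C * B x) u = C * gft f1 f2 B u) ∧
    ((∀ l x u (D : 𝒢), f2 l x u * D = D * f2 l x u) →
      ∀ u, gft f1 f2 (fun x => B x * C) u = gft f1 f2 B u * C) :=
  gft_central_linear_general f1 f2 C B hInt
end
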